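/- arXiv:1407.0777 — 5 statements merged into one kernel-verified Lean document; each statement's English description precedes it below -/
import Mathlib

section
/- Let k ≥ 1 and let Q = (q_n) be a basic sequence that is infinite in limit. Suppose x = E_0.E_1E_2… w.r.t. Q is Q-normal of order k. Then there exists a real number y = F_0.F_1F_2… w.r.t. Q such that the set {n ≥ 1 : E_n ≠ F_n} has density zero and y is not Q-normal of order j for any j ≥ 1. -/
open Filter Finset MeasureTheory

noncomputable section
open scoped Classical

/-- `cantorProd q n = q 1 * q 2 * ... * q n` (empty product for `n = 0`). -/
def cantorProd (q : ℕ → ℕ) (n : ℕ) : ℕ := ∏ j ∈ Finset.Icc 1 n, q j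

/-- `T_{Q,n}(x) = q_1 q_2 ⋯ q_n · x (mod 1)`. -/
def TQ (q : ℕ → ℕ) (n : ℕ) (x : ℝ) : ℝ := Int.fract ((cantorProd q n : ℝ) * x)

/-- A basic sequence: `q n ≥ 2` for all `n ≥ 1`. -/
def BasicSeq (q : ℕ → ℕ) : Prop := ∀ n, 1 ≤ n → 2 ≤ q n

/-- `Q` is infinite in limit: `q n → ∞`. -/
def InfiniteInLimit (q : ℕ → ℕ) : Prop := Filter.Tendsto q Filter.atTop Filter.atTop

/-- `E` (indexed from 1) is the sequence of digits of the `Q`-Cantor series expansion of `x`: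
`E n ∈ {0, …, q n − 1}`, `E n ≠ q n − 1` infinitely often, and
`x = ⌊x⌋ + ∑_{n ≥ 1} E n / (q 1 ⋯ q n)`. -/
def IsCantorDigits (q : ℕ → ℕ) (E : ℕ → ℕ) (x : ℝ) : Prop :=
  (∀ n, 1 ≤ n → E n < q n) ∧
  {n | 1 ≤ n ∧ E n ≠ q n - 1}.Infinite ∧
  x = (⌊x⌋ : ℝ) + ∑' n : ℕ, (E (n + 1) : ℝ) / (cantorProd q (n + 1) : ℝ)

/-- `Q_n^{(k)} = ∑_{j=1}^n 1/(q_j q_{j+1} ⋯ q_{j+k-1})`. -/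
def Qnk (q : ℕ → ℕ) (k n : ℕ) : ℝ :=
  ∑ j ∈ Finset.Icc 1 n, 1 / ∏ i ∈ Finset.Ico j (j + k), (q i : ℝ)

/-- `Q` is `k`-divergent. -/
def KDivergent (q : ℕ → ℕ) (k : ℕ) : Prop :=
  Filter.Tendsto (fun n => Qnk q k n) Filter.atTop Filter.atTop

/-- `N_n^Q(B, x)`: the number of indices `1 ≤ i ≤ n - |B| + 1` at which the block `B`
occurs in the digit sequence `E`. -/
def blockCount (E : ℕ → ℕ) (B : List ℕ) (n : ℕ) : ℕ :=
  ((Finset.Icc 1 (n + 1 - B.length)).filter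
    (fun i => ∀ t, t < B.length → E (i + t) = B.getD t 0)).card

/-- The digit sequence `E` is `Q`-normal of order `k`. -/
def QNormalOfOrder (q : ℕ → ℕ) (E : ℕ → ℕ) (k : ℕ) : Prop :=
  ∀ B : List ℕ, B.length = k →
    Filter.Tendsto (fun n => (blockCount E B n : ℝ) / Qnk q k n) Filter.atTop (nhds 1)

/-- A sequence (indexed from 0) is uniformly distributed mod 1. -/
def UDMod1 (z : ℕ → ℝ) : Prop :=
  ∀ a b : ℝ, 0 ≤ a → a < b → b ≤ 1 →
    Filter.Tendsto
      (fun N => (((Finset.range N).filter (fun n => Int.fract (z n) ∈ Set.Ico a b)).card : ℝ) / N)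
      Filter.atTop (nhds (b - a))

/-- `x` is `Q`-distribution normal: `(T_{Q,n}(x))_{n ≥ 0}` is uniformly distributed mod 1. -/
def QDistNormal (q : ℕ → ℕ) (x : ℝ) : Prop := UDMod1 (fun n => TQ q n x)

/-- A set of natural numbers has (natural) density zero. -/
def DensityZero (A : Set ℕ) : Prop :=
  Filter.Tendsto (fun N => (((Finset.Icc 1 N).filter (fun n => n ∈ A)).card : ℝ) / N)
    Filter.atTop (nhds 0)

/-- The `n`-th digit (for `n ≥ 1`) of the `Q`-Cantor series expansion of `x`,
extracted via `E_n = ⌊q_n · T_{Q,n-1}(x)⌋`. -/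
def cantorDigit (q : ℕ → ℕ) (x : ℝ) (n : ℕ) : ℤ := ⌊(q n : ℝ) * TQ q (n - 1) x⌋

/-- `ψ_{P,Q}(x) = ∑_{n ≥ 1} min(E_n, q_n − 1)/(q_1 ⋯ q_n)`, where `E` are the `P`-digits of `x`. -/
def psiMap (p q : ℕ → ℕ) (x : ℝ) : ℝ :=
  ∑' n : ℕ, ((min (cantorDigit p x (n + 1)) ((q (n + 1) : ℤ) - 1) : ℤ) : ℝ) /
    (cantorProd q (n + 1) : ℝ)

/-- `N_n^Q(B, x)` defined via the canonical digits of the real number `x`. -/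
def blockCountReal (q : ℕ → ℕ) (x : ℝ) (B : List ℕ) (n : ℕ) : ℕ :=
  ((Finset.Icc 1 (n + 1 - B.length)).filter
    (fun i => ∀ t, t < B.length → cantorDigit q x (i + t) = (B.getD t 0 : ℤ))).card

/-- The real number `x` is `Q`-normal of order `k`. -/
def QNormalOfOrderReal (q : ℕ → ℕ) (x : ℝ) (k : ℕ) : Prop :=
  ∀ B : List ℕ, B.length = k →
    Filter.Tendsto (fun n => (blockCountReal q x B n : ℝ) / Qnk q k n) Filter.atTop (nhds 1)

/-- The discrepancy `D_N` of the finite sequence `x 1, …, x N` (of numbers in `[0,1)`). -/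
def discrepancy (N : ℕ) (x : ℕ → ℝ) : ℝ :=
  sSup {d : ℝ | ∃ a b : ℝ, 0 ≤ a ∧ a ≤ b ∧ b ≤ 1 ∧
    d = |(((Finset.Icc 1 N).filter (fun n => x n ∈ Set.Ico a b)).card : ℝ) / N - (b - a)|}

/-! Replace the digits of `x` by `0` on a sparse sequence of blocks. The `m`-th block ends at
some position `n` and has length about `2 Q_n^{(1)} + m`, so for `j ≤ m` it contains at least
`2 Q_n^{(1)} ≥ 2 Q_n^{(j)}` occurrences of the block `0…0` of length `j`: the ratio
`N_n(0…0) / Q_n^{(j)}` is at least `2` infinitely often. Because `q_n → ∞`, Cesàro gives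
`Q_n^{(1)} = o(n)`, so the blocks can be placed so far apart that together they have density
zero. Zero is an admissible digit and never equals `q_n - 1`, so the new digits are the
`Q`-expansion of `∑ F_n / (q_1 ⋯ q_n)`. -/

variable {q : ℕ → ℕ}

lemma BasicSeq.one_le_cast (hq : BasicSeq q) {i : ℕ} (hi : 1 ≤ i) : (1 : ℝ) ≤ q i := by
  exact_mod_cast (hq i hi).trans' one_le_two

lemma cantorProd_succ (q : ℕ → ℕ) (n : ℕ) :
    cantorProd q (n + 1) = cantorProd q n * q (n + 1) :=
  Finset.prod_Icc_succ_top (by omega) _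

lemma cantorProd_pos (hq : BasicSeq q) (n : ℕ) : 0 < cantorProd q n :=
  Finset.prod_pos fun i hi => by have := hq i (Finset.mem_Icc.1 hi).1; omega

lemma sum_range_maxDigit (hq : BasicSeq q) (N : ℕ) :
    ∑ n ∈ range N, ((q (n + 1) : ℝ) - 1) / cantorProd q (n + 1) = 1 - 1 / cantorProd q N := by
  have hterm : ∀ n, ((q (n + 1) : ℝ) - 1) / cantorProd q (n + 1) =
      1 / cantorProd q n - 1 / cantorProd q (n + 1) := by
    intro n
    have hP : (0 : ℝ) < cantorProd q n := by exact_mod_cast cantorProd_pos hq n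
    have hq' : (0 : ℝ) < q (n + 1) := zero_lt_one.trans_le (hq.one_le_cast (by omega))
    rw [cantorProd_succ, Nat.cast_mul]
    field_simp
  simp_rw [hterm, sum_range_sub']
  simp [cantorProd]

lemma tsum_digits_lt_one (hq : BasicSeq q) {F : ℕ → ℕ} (hlt : ∀ n, 1 ≤ n → F n < q n)
    (hne : ∃ n, 1 ≤ n ∧ F n ≠ q n - 1) :
    ∑' n : ℕ, (F (n + 1) : ℝ) / cantorProd q (n + 1) < 1 := by
  obtain ⟨n₀, hn₀, hne⟩ := hne
  set g : ℕ → ℝ := fun n => ((q (n + 1) : ℝ) - 1) / cantorProd q (n + 1)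
  have hP : ∀ n, (0 : ℝ) < cantorProd q n := fun n => by exact_mod_cast cantorProd_pos hq n
  have hg_le : ∀ N, ∑ n ∈ range N, g n ≤ 1 := fun N => by
    have := hP N
    rw [sum_range_maxDigit hq]
    linarith [one_div_pos.2 this]
  have hfg : ∀ n, (F (n + 1) : ℝ) / cantorProd q (n + 1) ≤ g n := fun n => by
    have : ((F (n + 1) + 1 : ℕ) : ℝ) ≤ q (n + 1) := by exact_mod_cast hlt (n + 1) (by omega)
    simp only [g]
    gcongr
    push_cast at this
    linarith
  have hg : Summable g :=
    summable_of_sum_range_le (fun n => (hfg n).trans' (by positivity)) hg_le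
  have hstrict : (F (n₀ - 1 + 1) : ℝ) / cantorProd q (n₀ - 1 + 1) < g (n₀ - 1) := by
    have hgap : F n₀ + 2 ≤ q n₀ := by have := hlt n₀ hn₀; omega
    have : ((F n₀ + 2 : ℕ) : ℝ) ≤ q n₀ := by exact_mod_cast hgap
    simp only [g, Nat.sub_add_cancel hn₀]
    gcongr
    · exact hP _
    · push_cast at this
      linarith
  calc _ < ∑' n, g n :=
        Summable.tsum_lt_tsum hfg hstrict (hg.of_nonneg_of_le (fun n => by positivity) hfg) hg
    _ ≤ 1 := hg.tsum_le_of_sum_range_le hg_le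

lemma isCantorDigits_tsum (hq : BasicSeq q) {F : ℕ → ℕ} (hlt : ∀ n, 1 ≤ n → F n < q n)
    (hinf : {n | 1 ≤ n ∧ F n ≠ q n - 1}.Infinite) :
    IsCantorDigits q F (∑' n : ℕ, (F (n + 1) : ℝ) / cantorProd q (n + 1)) := by
  refine ⟨hlt, hinf, ?_⟩
  have hfloor : ⌊∑' n : ℕ, (F (n + 1) : ℝ) / cantorProd q (n + 1)⌋ = 0 :=
    Int.floor_eq_zero_iff.2 ⟨tsum_nonneg fun n => by positivity,
      tsum_digits_lt_one hq hlt hinf.nonempty⟩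
  rw [hfloor, Int.cast_zero, zero_add]

lemma Qnk_nonneg (q : ℕ → ℕ) (k n : ℕ) : 0 ≤ Qnk q k n :=
  Finset.sum_nonneg fun _ _ => by positivity

lemma one_le_prod_Ico (hq : BasicSeq q) {j : ℕ} (hj : 1 ≤ j) (k : ℕ) :
    1 ≤ ∏ i ∈ Ico j (j + k), (q i : ℝ) :=
  Finset.one_le_prod fun _ hi => hq.one_le_cast (hj.trans (Finset.mem_Ico.1 hi).1)

lemma Qnk_pos (hq : BasicSeq q) (k : ℕ) {n : ℕ} (hn : 1 ≤ n) : 0 < Qnk q k n :=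
  Finset.sum_pos (fun _ hj => one_div_pos.2 <|
      zero_lt_one.trans_le (one_le_prod_Ico hq (Finset.mem_Icc.1 hj).1 k))
    ⟨1, Finset.mem_Icc.2 ⟨le_rfl, hn⟩⟩

lemma Qnk_antitone (hq : BasicSeq q) (n : ℕ) : Antitone fun k => Qnk q k n := by
  intro k k' hkk'
  refine Finset.sum_le_sum fun j hj => ?_
  have hj1 := (Finset.mem_Icc.1 hj).1
  refine one_div_le_one_div_of_le (zero_lt_one.trans_le (one_le_prod_Ico hq hj1 k)) ?_
  exact Finset.prod_le_prod_of_subset_of_one_le (Finset.Ico_subset_Ico_right (by omega))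
    (fun i _ => by positivity) fun i hi _ => hq.one_le_cast (hj1.trans (Finset.mem_Ico.1 hi).1)

lemma Qnk_one_eq_sum_range (q : ℕ → ℕ) (n : ℕ) :
    Qnk q 1 n = ∑ i ∈ range n, ((q (i + 1) : ℝ))⁻¹ := by
  induction n with
  | zero => simp [Qnk]
  | succ n ih =>
    rw [Qnk, Finset.sum_Icc_succ_top (by omega), ← Qnk, ih, Finset.sum_range_succ,
      Nat.Ico_succ_singleton, Finset.prod_singleton, one_div]

lemma eventually_Qnk_one_le (hinf : InfiniteInLimit q) {ε : ℝ} (hε : 0 < ε) :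
    ∀ᶠ n in atTop, Qnk q 1 n ≤ ε * n := by
  have hinv : Tendsto (fun i => ((q (i + 1) : ℝ))⁻¹) atTop (nhds 0) :=
    (tendsto_natCast_atTop_atTop.comp (hinf.comp (tendsto_add_atTop_nat 1))).inv_tendsto_atTop
  have havg := hinv.cesaro
  simp only [← Qnk_one_eq_sum_range] at havg
  filter_upwards [havg.eventually_lt_const hε, eventually_ge_atTop 1] with n hlt hn
  have hn' : (0 : ℝ) < n := by exact_mod_cast hn
  rw [inv_mul_lt_iff₀ hn'] at hlt
  linarith

lemma exists_long_sparse_chunk (hinf : InfiniteInLimit q) (m c : ℕ) :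
    ∃ a ℓ : ℕ, 2 * Qnk q 1 (a + ℓ) + m + 1 ≤ ℓ ∧ m * (c + ℓ) ≤ a := by
  -- `(m + 1) * 2 Q_n^{(1)}` and `(m + 1) * (c + m + 2)` each take at most half of `n`.
  have hε : (0 : ℝ) < 1 / (4 * (m + 1)) := by positivity
  obtain ⟨n, hQ, hn⟩ := ((eventually_Qnk_one_le hinf hε).and
    (eventually_ge_atTop (2 * (m + 1) * (c + m + 2)))).exists
  set ℓ := ⌈2 * Qnk q 1 n⌉₊ + m + 1 with hℓ
  have hQ0 := Qnk_nonneg q 1 n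
  have hceil := Nat.ceil_lt_add_one (by positivity : 0 ≤ 2 * Qnk q 1 n)
  have hfit : m * (c + ℓ) + ℓ ≤ n := by
    have hn' : ((2 * (m + 1) * (c + m + 2) : ℕ) : ℝ) ≤ n := by exact_mod_cast hn
    have hQ' : 4 * (m + 1) * Qnk q 1 n ≤ n := by
      rw [div_mul_eq_mul_div, one_mul, le_div_iff₀ (by positivity)] at hQ
      linarith
    have : ((m * (c + ℓ) + ℓ : ℕ) : ℝ) ≤ n := by
      push_cast [hℓ] at hn' ⊢
      nlinarith
    exact_mod_cast this
  refine ⟨n - ℓ, ℓ, ?_, Nat.le_sub_of_add_le hfit⟩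
  rw [Nat.sub_add_cancel (by omega), hℓ]
  push_cast
  linarith [Nat.le_ceil (2 * Qnk q 1 n)]

lemma exists_long_sparse_chunks (hinf : InfiniteInLimit q) :
    ∃ a ℓ : ℕ → ℕ, (∀ m, 2 * Qnk q 1 (a m + ℓ m) + m + 1 ≤ ℓ m) ∧
      ∀ m, (m + 1) * (a m + ℓ m + ℓ (m + 1)) ≤ a (m + 1) := by
  choose A L hlen hsparse using exists_long_sparse_chunk hinf
  -- `c m` is where block `m - 1` ends (`0` for `m = 0`).
  let c : ℕ → ℕ := fun m => Nat.rec 0 (fun m cm => A m cm + L m cm) m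
  exact ⟨fun m => A m (c m), fun m => L m (c m), fun m => hlen m (c m),
    fun m => hsparse (m + 1) (c (m + 1))⟩

lemma DensityZero.mono {A B : Set ℕ} (hA : DensityZero A) (hBA : B ⊆ A) : DensityZero B := by
  refine squeeze_zero (fun N => by positivity) (fun N => ?_) hA
  gcongr

def chunkUnion (a ℓ : ℕ → ℕ) : Set ℕ := ⋃ m, Set.Ioc (a m) (a m + ℓ m)

section Sparse

variable {a ℓ : ℕ → ℕ} (hℓ : ∀ m, 1 ≤ ℓ m)
  (hsparse : ∀ m, (m + 1) * (a m + ℓ m + ℓ (m + 1)) ≤ a (m + 1))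
include hℓ hsparse

lemma le_offset (m : ℕ) : m ≤ a m := by
  cases m with
  | zero => omega
  | succ m => nlinarith [hsparse m, hℓ (m + 1)]

lemma chunkUnion_infinite : (chunkUnion a ℓ).Infinite :=
  Set.infinite_of_forall_exists_gt fun N =>
    ⟨a N + 1, Set.mem_iUnion.2 ⟨N, by simp [hℓ N]⟩,
      by linarith [le_offset hℓ hsparse N]⟩

lemma mul_card_chunkUnion_le {P N : ℕ} (hP : 1 ≤ P) (hN : a P < N) :
    P * #{n ∈ Icc 1 N | n ∈ chunkUnion a ℓ} ≤ N := by
  have hmono : Monotone fun m => a m + ℓ m :=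
    monotone_nat_of_le_succ fun m => by nlinarith [hsparse m]
  have hle := le_offset hℓ hsparse
  obtain ⟨R, hPR, hR, hmax⟩ : ∃ R, P ≤ R ∧ a R < N ∧ ∀ m, a m < N → m ≤ R := by
    have hPN : P ≤ N := by linarith [hle P]
    refine ⟨Nat.findGreatest (fun m => a m < N) N, Nat.le_findGreatest hPN hN,
      Nat.findGreatest_spec (P := fun m => a m < N) hPN hN, fun m hm => ?_⟩
    by_contra! h
    exact Nat.findGreatest_is_greatest h (by linarith [hle m]) hm
  obtain ⟨R, rfl⟩ := Nat.exists_eq_add_of_le' (hP.trans hPR)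
  have hsub : {n ∈ Icc 1 N | n ∈ chunkUnion a ℓ} ⊆
      Icc 1 (a R + ℓ R) ∪ Ioc (a (R + 1)) (a (R + 1) + ℓ (R + 1)) := by
    intro n hn
    simp only [chunkUnion, mem_filter, mem_Icc, Set.mem_iUnion, Set.mem_Ioc] at hn
    obtain ⟨⟨hn1, hnN⟩, m, ham, hmℓ⟩ := hn
    rcases (hmax m (by omega)).eq_or_lt with rfl | hlt
    · simp [ham, hmℓ]
    · have : a m + ℓ m ≤ a R + ℓ R := hmono (Nat.le_of_lt_succ hlt)
      simp only [mem_union, mem_Icc, mem_Ioc]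
      omega
  calc P * #{n ∈ Icc 1 N | n ∈ chunkUnion a ℓ}
      ≤ (R + 1) * (#(Icc 1 (a R + ℓ R)) + #(Ioc (a (R + 1)) (a (R + 1) + ℓ (R + 1)))) :=
        Nat.mul_le_mul hPR ((card_le_card hsub).trans (card_union_le _ _))
    _ = (R + 1) * (a R + ℓ R + ℓ (R + 1)) := by simp
    _ ≤ N := (hsparse R).trans hR.le

lemma densityZero_chunkUnion : DensityZero (chunkUnion a ℓ) := by
  refine tendsto_order.2
    ⟨fun ε hε => Eventually.of_forall fun N => hε.trans_le (by positivity), fun ε hε => ?_⟩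
  obtain ⟨P, hP⟩ := exists_nat_one_div_lt hε
  filter_upwards [eventually_gt_atTop (a (P + 1))] with N hN
  have hcard := mul_card_chunkUnion_le hℓ hsparse (Nat.le_add_left 1 P) hN
  have hN' : (0 : ℝ) < N := by exact_mod_cast (Nat.zero_le _).trans_lt hN
  refine lt_of_le_of_lt ?_ hP
  rw [div_le_div_iff₀ hN' (by positivity), one_mul]
  exact_mod_cast (by linarith : #{n ∈ Icc 1 N | n ∈ chunkUnion a ℓ} * (P + 1) ≤ N)

end Sparse

lemma le_blockCount_replicate_zero {F : ℕ → ℕ} {a ℓ : ℕ}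
    (hF : ∀ i, a < i → i ≤ a + ℓ → F i = 0) (j : ℕ) :
    ℓ + 1 - j ≤ blockCount F (List.replicate j 0) (a + ℓ) := by
  have hsub : Ioc a (a + ℓ + 1 - j) ⊆ {i ∈ Icc 1 (a + ℓ + 1 - j) |
      ∀ t, t < j → F (i + t) = (List.replicate j 0).getD t 0} := by
    intro i hi
    simp only [mem_Ioc] at hi
    simp only [mem_filter, mem_Icc]
    refine ⟨⟨by omega, hi.2⟩, fun t ht => ?_⟩
    rw [List.getD_replicate _ ht]
    exact hF _ (by omega) (by omega)
  have := card_le_card hsub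
  simp only [Nat.card_Ioc] at this
  rw [blockCount, List.length_replicate]
  omega

lemma not_qNormalOfOrder_of_frequently (hq : BasicSeq q) {F : ℕ → ℕ} {B : List ℕ}
    (h : ∃ᶠ n in atTop, 2 * Qnk q B.length n ≤ blockCount F B n) :
    ¬ QNormalOfOrder q F B.length := by
  intro hnorm
  obtain ⟨n, hcount, hlt, hn⟩ := (h.and_eventually (((hnorm B rfl).eventually_lt_const
    one_lt_two).and (eventually_ge_atTop 1))).exists
  rw [div_lt_iff₀ (Qnk_pos hq _ hn)] at hlt
  linarith

lemma not_qNormalOfOrder_of_zero_runs (hq : BasicSeq q) {F a ℓ : ℕ → ℕ}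
    (hF : ∀ n ∈ chunkUnion a ℓ, F n = 0)
    (hlen : ∀ m, 2 * Qnk q 1 (a m + ℓ m) + m + 1 ≤ ℓ m)
    {j : ℕ} (hj : 1 ≤ j) : ¬ QNormalOfOrder q F j := by
  have key := not_qNormalOfOrder_of_frequently hq (F := F) (B := List.replicate j 0)
  rw [List.length_replicate] at key
  refine key (frequently_atTop.2 fun N => ?_)
  set m := N + j
  set n := a m + ℓ m
  have hQ := Qnk_nonneg q 1 n
  have hlong : 2 * Qnk q 1 n + m + 1 ≤ ℓ m := hlen m
  have hjm : (j : ℝ) ≤ m := by exact_mod_cast Nat.le_add_left j N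
  have hNm : (N : ℝ) ≤ ℓ m := by push_cast [m] at hlong hjm ⊢; linarith
  have hNm' : N ≤ ℓ m := by exact_mod_cast hNm
  refine ⟨n, by omega, ?_⟩
  have hcount : ((ℓ m + 1 - j : ℕ) : ℝ) ≤ blockCount F (List.replicate j 0) n := by
    exact_mod_cast le_blockCount_replicate_zero
      (fun i h1 h2 => hF i (Set.mem_iUnion.2 ⟨m, h1, h2⟩)) j
  rw [Nat.cast_sub (by exact_mod_cast (by linarith : (j : ℝ) ≤ ℓ m + 1))] at hcount
  push_cast at hcount
  calc 2 * Qnk q j n ≤ 2 * Qnk q 1 n := by gcongr; exact Qnk_antitone hq n hj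
    _ ≤ ℓ m + 1 - j := by linarith
    _ ≤ _ := hcount

theorem stmt_0_general (q : ℕ → ℕ) (hq : BasicSeq q)
    (hinf : InfiniteInLimit q) (x : ℝ) (E : ℕ → ℕ) (hE : IsCantorDigits q E x) :
    ∃ (y : ℝ) (F : ℕ → ℕ), IsCantorDigits q F y ∧
      DensityZero {n | 1 ≤ n ∧ E n ≠ F n} ∧
      ∀ j, 1 ≤ j → ¬ QNormalOfOrder q F j := by
  obtain ⟨a, ℓ, hlen, hsparse⟩ := exists_long_sparse_chunks hinf
  have hℓ : ∀ m, 1 ≤ ℓ m := fun m => by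
    have := Qnk_nonneg q 1 (a m + ℓ m)
    exact_mod_cast (by linarith [hlen m] : (1 : ℝ) ≤ ℓ m)
  set S := chunkUnion a ℓ
  have hF : ∀ n ∈ S, Sᶜ.indicator E n = 0 := fun n hn =>
    Set.indicator_of_notMem (Set.notMem_compl_iff.2 hn) E
  refine ⟨_, Sᶜ.indicator E, isCantorDigits_tsum hq (fun n hn => ?_) ?_, ?_,
    fun j hj => not_qNormalOfOrder_of_zero_runs hq hF hlen hj⟩
  · exact (Set.indicator_le_self _ E n).trans_lt (hE.1 n hn)
  · refine (chunkUnion_infinite hℓ hsparse).mono fun n hn => ?_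
    obtain ⟨m, ham, -⟩ := Set.mem_iUnion.1 hn
    have := hq n (by omega)
    exact ⟨by omega, by rw [hF n hn]; omega⟩
  · refine (densityZero_chunkUnion hℓ hsparse).mono fun n ⟨_, hne⟩ => ?_
    by_contra hn
    exact hne (Set.indicator_of_mem hn E).symm

/-- if `Q` is infinite in limit and `x` is `Q`-normal of order `k`, then there is
a `y` whose digits differ from those of `x` on a set of density zero and which is not
`Q`-normal of any order. -/
theorem stmt_0 (k : ℕ) (hk : 1 ≤ k) (q : ℕ → ℕ) (hq : BasicSeq q)
    (hinf : InfiniteInLimit q) (x : ℝ) (E : ℕ → ℕ) (hE : IsCantorDigits q E x)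
    (hnorm : QNormalOfOrder q E k) :
    ∃ (y : ℝ) (F : ℕ → ℕ), IsCantorDigits q F y ∧
      DensityZero {n | 1 ≤ n ∧ E n ≠ F n} ∧
      ∀ j, 1 ≤ j → ¬ QNormalOfOrder q F j :=
  stmt_0_general q hq hinf x E hE
end
end

section
/- Let Q be a basic sequence that is infinite in limit and let r be a rational number that is not an integer. Then there exists a real number x such that x is Q-distribution normal but rx is not Q-distribution normal. -/
open Filter Finset MeasureTheory

noncomputable section
open scoped Classical

/-!
Write `r = p / s` in lowest terms, so `s ≥ 2`, and fix a uniformly distributed sequence `a` in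
`[0, 1)`. Build the `Q`-Cantor digits `E_n` of `x` one at a time: `E_{n+1}` is
`⌊(q_{n+1} - s - 1) a_n⌋` plus a shift `t < s`. Since
`T_{Q,n}(x) = (E_{n+1} + T_{Q,n+1}(x)) / q_{n+1}`, the first part gives
`T_{Q,n}(x) - a_n = O(s / q_{n+1}) → 0`, so `x` is `Q`-distribution normal.
Writing `q_1 ⋯ q_n x = K_n + T_{Q,n}(x)`, the shift moves `K_n` through all residues modulo `s`,
and as `p` is invertible modulo `s` it can be chosen to put `r (K_n + a_n)` within `1/s ≤ 1/2`
above an integer. Then `T_{Q,n}(r x) ≡ r (K_n + a_n) + r (T_{Q,n}(x) - a_n)` eventually avoids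
`[5/8, 7/8)`, so `r x` is not `Q`-distribution normal.
-/

namespace CantorSeries

lemma card_filter_range_le_add {P Q : ℕ → Prop} [DecidablePred P] [DecidablePred Q] {N₀ : ℕ}
    (h : ∀ n, N₀ ≤ n → P n → Q n) (N : ℕ) :
    #{n ∈ range N | P n} ≤ #{n ∈ range N | Q n} + N₀ := by
  calc #{n ∈ range N | P n} ≤ #({n ∈ range N | Q n} ∪ range N₀) := by
        refine card_le_card fun n hn => ?_
        simp only [mem_filter, mem_range, mem_union] at hn ⊢
        by_cases hn₀ : N₀ ≤ n
        · exact Or.inl ⟨hn.1, h n hn₀ hn.2⟩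
        · exact Or.inr (by omega)
    _ ≤ #{n ∈ range N | Q n} + N₀ := (card_union_le _ _).trans (by rw [card_range])

def freq (u : ℕ → ℝ) (a b : ℝ) (N : ℕ) : ℝ := #{n ∈ range N | u n ∈ Set.Ico a b} / N

lemma udMod1_iff_of_mem_Ico {u : ℕ → ℝ} (hu : ∀ n, u n ∈ Set.Ico 0 1) :
    UDMod1 u ↔
      ∀ a b : ℝ, 0 ≤ a → a < b → b ≤ 1 → Tendsto (freq u a b) atTop (nhds (b - a)) := by
  simp only [UDMod1, Int.fract_eq_self.2 (hu _)]
  rfl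

lemma freq_le_freq_add {u v : ℕ → ℝ} {a b c d : ℝ} {N₀ : ℕ}
    (h : ∀ n, N₀ ≤ n → u n ∈ Set.Ico a b → v n ∈ Set.Ico c d) (N : ℕ) :
    freq u a b N ≤ freq v c d N + (N₀ : ℝ) / N := by
  rw [freq, freq, ← add_div]
  exact div_le_div_of_nonneg_right (by exact_mod_cast card_filter_range_le_add h N) N.cast_nonneg

lemma not_udMod1_of_eventually_notMem {z : ℕ → ℝ} {a b : ℝ} (ha : 0 ≤ a) (hab : a < b)
    (hb : b ≤ 1) (h : ∀ᶠ n in atTop, Int.fract (z n) ∉ Set.Ico a b) : ¬ UDMod1 z := by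
  intro hz
  obtain ⟨N₀, hN₀⟩ := eventually_atTop.1 h
  have hbound (N : ℕ) : freq (fun n => Int.fract (z n)) a b N ≤ (N₀ : ℝ) / N := by
    rw [freq]
    gcongr
    simpa using card_filter_range_le_add (Q := fun _ => False) (fun n hn hmem => hN₀ n hn hmem) N
  have := le_of_tendsto_of_tendsto' (hz a b ha hab hb)
    (tendsto_const_div_atTop_nhds_zero_nat (N₀ : ℝ)) hbound
  linarith

section Perturbation

variable {u v : ℕ → ℝ} {a b : ℝ}
  (hu : ∀ a b : ℝ, 0 ≤ a → a < b → b ≤ 1 → Tendsto (freq u a b) atTop (nhds (b - a)))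
  (huv : Tendsto (fun n => v n - u n) atTop (nhds 0))
include hu huv

lemma eventually_lt_freq_of_tendsto_sub (ha : 0 ≤ a) (hb : b ≤ 1) {c : ℝ} (hc : c < b - a) :
    ∀ᶠ N in atTop, c < freq v a b N := by
  rcases lt_or_ge c 0 with hc₀ | hc₀
  · exact Eventually.of_forall fun N => hc₀.trans_le (by unfold freq; positivity)
  set η := (b - a - c) / 4
  have hη : 0 < η := by simp only [η]; linarith
  obtain ⟨N₀, hN₀⟩ := Metric.tendsto_atTop.1 huv η hη
  have hinner : ∀ n, N₀ ≤ n → u n ∈ Set.Ico (a + η) (b - η) →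
      v n ∈ Set.Ico a b := by
    intro n hn ⟨h₁, h₂⟩
    have := abs_lt.1 (by simpa [Real.dist_eq] using hN₀ n hn)
    constructor <;> linarith
  have hlim := hu (a + η) (b - η) (by linarith) (by simp only [η]; linarith) (by linarith)
  filter_upwards [hlim.eventually (lt_mem_nhds (show b - η - (a + η) - η < _ by linarith)),
    (tendsto_const_div_atTop_nhds_zero_nat (N₀ : ℝ)).eventually (gt_mem_nhds hη)]
    with N h₁ h₂
  have := freq_le_freq_add hinner N
  simp only [η] at h₁ h₂ this ⊢
  linarith

lemma eventually_freq_lt_of_tendsto_sub (hu01 : ∀ n, u n ∈ Set.Ico 0 1) (ha : 0 ≤ a)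
    (hab : a < b) (hb : b ≤ 1) {c : ℝ} (hc : b - a < c) :
    ∀ᶠ N in atTop, freq v a b N < c := by
  set η := (c - (b - a)) / 4
  have hη : 0 < η := by simp only [η]; linarith
  obtain ⟨N₀, hN₀⟩ := Metric.tendsto_atTop.1 huv η hη
  have houter : ∀ n, N₀ ≤ n → v n ∈ Set.Ico a b →
      u n ∈ Set.Ico (max (a - η) 0) (min (b + η) 1) := by
    intro n hn ⟨h₁, h₂⟩
    have := abs_lt.1 (by simpa [Real.dist_eq] using hN₀ n hn)
    exact ⟨max_le (by linarith) (hu01 n).1, lt_min (by linarith) (hu01 n).2⟩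
  have hlim := hu (max (a - η) 0) (min (b + η) 1) (le_max_right _ _)
    (max_lt (lt_min (by linarith) (by linarith)) (lt_min (by linarith) zero_lt_one))
    (min_le_right _ _)
  have hlen : min (b + η) 1 - max (a - η) 0 ≤ b - a + 2 * η := by
    have := min_le_left (b + η) 1
    have := le_max_left (a - η) 0
    linarith
  filter_upwards [hlim.eventually (gt_mem_nhds (lt_add_of_pos_right _ hη)),
    (tendsto_const_div_atTop_nhds_zero_nat (N₀ : ℝ)).eventually (gt_mem_nhds hη)]
    with N h₁ h₂
  have := freq_le_freq_add houter N
  simp only [η] at h₁ h₂ this hlen ⊢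
  linarith

end Perturbation

lemma udMod1_of_tendsto_sub {u v : ℕ → ℝ} (hu : UDMod1 u) (hu01 : ∀ n, u n ∈ Set.Ico 0 1)
    (hv01 : ∀ n, v n ∈ Set.Ico 0 1) (huv : Tendsto (fun n => v n - u n) atTop (nhds 0)) :
    UDMod1 v := by
  rw [udMod1_iff_of_mem_Ico hu01] at hu
  rw [udMod1_iff_of_mem_Ico hv01]
  exact fun a b ha hab hb => tendsto_order.2
    ⟨fun c hc => eventually_lt_freq_of_tendsto_sub hu huv ha hb hc,
      fun c hc => eventually_freq_lt_of_tendsto_sub hu huv hu01 ha hab hb hc⟩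

lemma card_filter_range_add (P : ℕ → Prop) [DecidablePred P] (N k : ℕ) :
    #{n ∈ range (N + k) | P n} = #{n ∈ range N | P n} + #{i ∈ range k | P (N + i)} := by
  simp only [card_filter, sum_range_add]

lemma abs_card_filter_div_mem_Ico_sub_le {L : ℕ} (hL : 0 < L) {a b : ℝ} (ha : 0 ≤ a)
    (hab : a ≤ b) (hb : b ≤ 1) :
    |(#{k ∈ range L | ((k : ℕ) : ℝ) / L ∈ Set.Ico a b} : ℝ) - L * (b - a)| ≤ 1 := by
  have hL' : (0 : ℝ) < L := by exact_mod_cast hL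
  have hfilter :
      {k ∈ range L | ((k : ℕ) : ℝ) / L ∈ Set.Ico a b} = Ico ⌈L * a⌉₊ ⌈L * b⌉₊ := by
    ext k
    simp only [mem_filter, mem_range, Set.mem_Ico, mem_Ico, le_div_iff₀ hL', div_lt_iff₀ hL',
      Nat.ceil_le, Nat.lt_ceil]
    constructor
    · rintro ⟨-, h₁, h₂⟩
      exact ⟨by linarith, by linarith⟩
    · rintro ⟨h₁, h₂⟩
      have hk : (k : ℝ) < L := h₂.trans_le (by nlinarith)
      exact ⟨by exact_mod_cast hk, by linarith, by linarith⟩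
  have hceil : ⌈L * a⌉₊ ≤ ⌈L * b⌉₊ := Nat.ceil_mono (by nlinarith)
  rw [hfilter, Nat.card_Ico, Nat.cast_sub hceil, abs_le]
  have := Nat.le_ceil (L * a)
  have := Nat.le_ceil (L * b)
  have := Nat.ceil_lt_add_one (by positivity : 0 ≤ (L : ℝ) * a)
  have := Nat.ceil_lt_add_one (by nlinarith : 0 ≤ (L : ℝ) * b)
  constructor <;> nlinarith

/-- On the block of indices `[m², (m + 1)²)` it runs through `0, 1/(2m+1), …, 2m/(2m+1)`. -/
def blockSeq (n : ℕ) : ℝ := ((n - n.sqrt * n.sqrt : ℕ) : ℝ) / (2 * n.sqrt + 1)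

lemma blockSeq_mem_Ico (n : ℕ) : blockSeq n ∈ Set.Ico 0 1 := by
  have := Nat.sqrt_le_add n
  refine ⟨by unfold blockSeq; positivity, (div_lt_one (by positivity)).2 ?_⟩
  exact_mod_cast (by omega : n - n.sqrt * n.sqrt < 2 * n.sqrt + 1)

lemma blockSeq_mul_self_add {m k : ℕ} (hk : k ≤ 2 * m) :
    blockSeq (m * m + k) = k / (2 * m + 1) := by
  simp [blockSeq, Nat.sqrt_add_eq m (by omega : k ≤ m + m)]

section Count

variable {a b : ℝ} (ha : 0 ≤ a) (hab : a ≤ b) (hb : b ≤ 1)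
include ha hab hb

lemma abs_card_blockSeq_mul_self_sub_le (m : ℕ) :
    |(#{n ∈ range (m * m) | blockSeq n ∈ Set.Ico a b} : ℝ) - m * m * (b - a)| ≤ m := by
  induction m with
  | zero => simp
  | succ m ih =>
    have hblock : #{i ∈ range (2 * m + 1) | blockSeq (m * m + i) ∈ Set.Ico a b}
        = #{i ∈ range (2 * m + 1) | ((i : ℕ) : ℝ) / (2 * m + 1 : ℕ) ∈ Set.Ico a b} := by
      refine congrArg card (filter_congr fun i hi => ?_)
      rw [blockSeq_mul_self_add (by simp at hi; omega)]
      push_cast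
      rfl
    have hsucc := abs_card_filter_div_mem_Ico_sub_le (L := 2 * m + 1) (by omega) ha hab hb
    rw [show (m + 1) * (m + 1) = m * m + (2 * m + 1) by ring, card_filter_range_add, hblock]
    push_cast at hsucc ⊢
    rw [abs_le] at ih hsucc ⊢
    constructor <;> nlinarith

lemma abs_card_blockSeq_sub_le {m k : ℕ} (hk : k ≤ 2 * m) :
    |(#{n ∈ range (m * m + k) | blockSeq n ∈ Set.Ico a b} : ℝ) - (m * m + k : ℕ) * (b - a)|
      ≤ 5 * m := by
  have hsq := abs_card_blockSeq_mul_self_sub_le ha hab hb m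
  have htail : (#{i ∈ range k | blockSeq (m * m + i) ∈ Set.Ico a b} : ℝ) ≤ k := by
    exact_mod_cast (card_filter_le (range k) _).trans (card_range k).le
  have hk' : (k : ℝ) ≤ 2 * m := by exact_mod_cast hk
  rw [card_filter_range_add]
  push_cast
  rw [abs_le] at hsq ⊢
  constructor <;> nlinarith [Nat.cast_nonneg (α := ℝ)
    #{i ∈ range k | blockSeq (m * m + i) ∈ Set.Ico a b}]

end Count

lemma udMod1_blockSeq : UDMod1 blockSeq := by
  rw [udMod1_iff_of_mem_Ico blockSeq_mem_Ico]
  intro a b ha hab hb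
  have hsqrt : Tendsto Nat.sqrt atTop atTop :=
    tendsto_atTop_atTop.2 fun m => ⟨m * m, fun n hn => Nat.le_sqrt.2 hn⟩
  rw [tendsto_iff_norm_sub_tendsto_zero]
  refine squeeze_zero' (Eventually.of_forall fun N => norm_nonneg _) ?_
    ((tendsto_const_div_atTop_nhds_zero_nat 5).comp hsqrt)
  filter_upwards [eventually_ge_atTop 1] with N hN
  have hsN : ((N.sqrt * N.sqrt : ℕ) : ℝ) ≤ N := by exact_mod_cast Nat.sqrt_le N
  have hN' : (0 : ℝ) < N := by exact_mod_cast hN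
  have hs : (0 : ℝ) < N.sqrt := by exact_mod_cast Nat.sqrt_pos.2 hN
  rw [Real.norm_eq_abs, freq, div_sub' hN'.ne', abs_div, abs_of_pos hN', Function.comp_apply,
    div_le_div_iff₀ hN' hs]
  push_cast at hsN
  have hN : N = N.sqrt * N.sqrt + (N - N.sqrt * N.sqrt) := by have := Nat.sqrt_le N; omega
  have hbound := abs_card_blockSeq_sub_le ha hab.le hb
    (by have := Nat.sqrt_le_add N; omega : N - N.sqrt * N.sqrt ≤ 2 * N.sqrt)
  rw [← hN] at hbound
  calc _ ≤ (5 : ℝ) * N.sqrt * N.sqrt := by gcongr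
    _ ≤ 5 * N := by nlinarith

lemma cantorProd_succ (q : ℕ → ℕ) (n : ℕ) :
    cantorProd q (n + 1) = cantorProd q n * q (n + 1) :=
  prod_Icc_succ_top (by omega) q

lemma cantorProd_pos {q : ℕ → ℕ} (hq : ∀ n, 0 < q (n + 1)) (n : ℕ) : 0 < cantorProd q n :=
  prod_pos fun j hj => by
    obtain ⟨i, rfl⟩ : ∃ i, j = i + 1 := ⟨j - 1, by simp only [mem_Icc] at hj; omega⟩
    exact hq i

lemma exists_forall_cantorProd_mul_mem_Icc {q K : ℕ → ℕ} (hq : ∀ n, 0 < q (n + 1))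
    (hlow : ∀ n, K n * q (n + 1) ≤ K (n + 1)) (hup : ∀ n, K (n + 1) < (K n + 1) * q (n + 1)) :
    ∃ x : ℝ, ∀ n, cantorProd q n * x ∈ Set.Icc (K n : ℝ) (K n + 1) := by
  have hP (n : ℕ) : (0 : ℝ) < cantorProd q n := by exact_mod_cast cantorProd_pos hq n
  have hmono : Monotone fun n => (K n : ℝ) / cantorProd q n := by
    refine monotone_nat_of_le_succ fun n => ?_
    have hq' : (0 : ℝ) < q (n + 1) := by exact_mod_cast hq n
    rw [cantorProd_succ, Nat.cast_mul, div_le_div_iff₀ (hP n) (mul_pos (hP n) hq')]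
    have : (K n : ℝ) * q (n + 1) ≤ K (n + 1) := by exact_mod_cast hlow n
    nlinarith [hP n]
  have hanti : Antitone fun n => ((K n : ℝ) + 1) / cantorProd q n := by
    refine antitone_nat_of_succ_le fun n => ?_
    have hq' : (0 : ℝ) < q (n + 1) := by exact_mod_cast hq n
    rw [cantorProd_succ, Nat.cast_mul, div_le_div_iff₀ (mul_pos (hP n) hq') (hP n)]
    have : (K (n + 1) : ℝ) + 1 ≤ (K n + 1) * q (n + 1) := by exact_mod_cast hup n
    nlinarith [hP n]
  have hx := hmono.ciSup_mem_iInter_Icc_of_antitone hanti fun n => by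
    dsimp only
    gcongr
    linarith
  refine ⟨⨆ n, (K n : ℝ) / cantorProd q n, fun n => ?_⟩
  obtain ⟨h₁, h₂⟩ := Set.mem_iInter.1 hx n
  rw [div_le_iff₀' (hP n)] at h₁
  rw [le_div_iff₀' (hP n)] at h₂
  exact ⟨h₁, h₂⟩

lemma exists_cantorProd_mul_eq_add_TQ {q K E : ℕ → ℕ} (hq : ∀ n, 0 < q (n + 1))
    (hK : ∀ n, K (n + 1) = K n * q (n + 1) + E (n + 1))
    (hE : ∀ n, E (n + 1) + 2 ≤ q (n + 1)) :
    ∃ x : ℝ, ∀ n, cantorProd q n * x = K n + TQ q n x ∧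
      q (n + 1) * TQ q n x = E (n + 1) + TQ q (n + 1) x := by
  obtain ⟨x, hx⟩ := exists_forall_cantorProd_mul_mem_Icc (K := K) hq
    (fun n => by rw [hK]; omega)
    (fun n => by rw [hK, add_mul, one_mul]; have := hE n; omega)
  have hrec (n : ℕ) : (q (n + 1) : ℝ) * (cantorProd q n * x - K n)
      = E (n + 1) + (cantorProd q (n + 1) * x - K (n + 1)) := by
    rw [cantorProd_succ, hK]
    push_cast
    ring
  have hlt (n : ℕ) : cantorProd q n * x - K n < 1 := by
    have hq' : (0 : ℝ) < q (n + 1) := by exact_mod_cast hq n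
    have hE' : (E (n + 1) : ℝ) + 2 ≤ q (n + 1) := by exact_mod_cast hE n
    have := hrec n
    have := (hx (n + 1)).2
    refine lt_of_mul_lt_mul_left ?_ hq'.le
    linarith
  have hTQ (n : ℕ) : TQ q n x = cantorProd q n * x - K n := by
    rw [TQ, Int.fract_eq_iff]
    exact ⟨by linarith [(hx n).1], hlt n, K n, by push_cast; ring⟩
  exact ⟨x, fun n => ⟨by rw [hTQ]; ring, by rw [hTQ, hTQ, hrec]⟩⟩

lemma fract_add_notMem_Ico {y d : ℝ} (hy : Int.fract y < 1 / 2) (hd : |d| ≤ 1 / 8) :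
    Int.fract (y + d) ∉ Set.Ico (5 / 8) (7 / 8) := by
  have hd' := abs_le.1 hd
  have hy₀ := Int.fract_nonneg y
  have hshift : Int.fract (y + d) = Int.fract (Int.fract y + d) := by
    rw [← Int.fract_add_intCast (Int.fract y + d) ⌊y⌋]
    congr 1
    linarith [Int.floor_add_fract y]
  rw [hshift]
  rcases lt_or_ge (Int.fract y + d) 0 with hneg | hnonneg
  · rw [show Int.fract y + d = Int.fract y + d + 1 - 1 by ring, Int.fract_sub_one,
      Int.fract_eq_self.2 ⟨by linarith, by linarith⟩]
    exact fun h => by linarith [h.2]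
  · rw [Int.fract_eq_self.2 ⟨hnonneg, by linarith⟩]
    exact fun h => by linarith [h.1]

lemma exists_lt_den_fract_add_mul_lt (r : ℚ) (y : ℝ) :
    ∃ t < r.den, Int.fract (y + r * t) < 1 / r.den := by
  have hs : (0 : ℝ) < r.den := by exact_mod_cast r.pos
  obtain ⟨u, v, huv⟩ : IsCoprime r.num (r.den : ℤ) := by
    rw [Int.isCoprime_iff_gcd_eq_one]
    exact r.reduced
  set m : ℤ := ⌊r.den * Int.fract y⌋
  set t : ℤ := -m * u % r.den
  have ht₀ : 0 ≤ t := Int.emod_nonneg _ (by exact_mod_cast r.den_nz)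
  have ht₁ : t < r.den := Int.emod_lt_of_pos _ (by exact_mod_cast r.pos)
  -- `u` inverts `r.num` modulo `r.den`, so `r.num * t ≡ -m`
  obtain ⟨c, hc⟩ : ∃ c : ℤ, r.num * t = -m + r.den * c :=
    ⟨m * v - r.num * (-m * u / r.den), by
      simp only [t, Int.emod_def]
      linear_combination (-m) * huv⟩
  have hrt : (r : ℝ) * (t.toNat : ℕ) = -m / r.den + c := by
    have htcast : ((t.toNat : ℕ) : ℝ) = t := by exact_mod_cast Int.toNat_of_nonneg ht₀
    have hc' : (r.num : ℝ) * t = -m + r.den * c := by exact_mod_cast hc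
    rw [htcast, Rat.cast_def]
    field_simp
    linear_combination hc'
  refine ⟨t.toNat, by omega, ?_⟩
  have hm₁ := Int.floor_le ((r.den : ℝ) * Int.fract y)
  have hm₂ := Int.lt_floor_add_one ((r.den : ℝ) * Int.fract y)
  have hfract : Int.fract (y + r * (t.toNat : ℕ)) = Int.fract y - m / r.den := by
    rw [Int.fract_eq_iff]
    refine ⟨?_, ?_, ⌊y⌋ + c, ?_⟩
    · rw [sub_nonneg, div_le_iff₀' hs]
      exact hm₁
    · have : (m : ℝ) / r.den ≥ 0 := by
        have : (0 : ℤ) ≤ m := Int.floor_nonneg.2 (by positivity)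
        positivity
      linarith [Int.fract_lt_one y]
    · rw [hrt]
      push_cast
      linear_combination -Int.floor_add_fract y
  rw [hfract, sub_lt_iff_lt_add, ← add_div, lt_div_iff₀' hs]
  linarith

def residueShift (r : ℚ) (y : ℝ) : ℕ := (exists_lt_den_fract_add_mul_lt r y).choose

lemma residueShift_lt (r : ℚ) (y : ℝ) : residueShift r y < r.den :=
  (exists_lt_den_fract_add_mul_lt r y).choose_spec.1

lemma fract_add_mul_residueShift_lt (r : ℚ) (y : ℝ) :
    Int.fract (y + r * residueShift r y) < 1 / r.den :=
  (exists_lt_den_fract_add_mul_lt r y).choose_spec.2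

section Construction

variable (q : ℕ → ℕ) (r : ℚ) (a : ℕ → ℝ)

def coarseDigit (n : ℕ) : ℕ := ⌊((q (n + 1) - r.den - 1 : ℕ) : ℝ) * a n⌋₊

/-- The digit in position `n + 1` when the first `n` digits have numerator `k`. The coarse part
makes `T_{Q,n}(x)` close to `a n`; the shift `< r.den` picks the next numerator modulo `r.den`. -/
def nextDigit (n k : ℕ) : ℕ :=
  if r.den + 1 < q (n + 1) then
    coarseDigit q r a n +
      residueShift r (r * ((k * q (n + 1) + coarseDigit q r a n : ℕ) + a (n + 1)))
  else 0

def numer : ℕ → ℕ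
  | 0 => 0
  | n + 1 => numer n * q (n + 1) + nextDigit q r a n (numer n)

variable {q r a}

lemma nextDigit_add_two_le (hq : BasicSeq q) (ha : ∀ n, a n ∈ Set.Ico 0 1) (n k : ℕ) :
    nextDigit q r a n k + 2 ≤ q (n + 1) := by
  unfold nextDigit
  split_ifs with h
  · have hcoarse : coarseDigit q r a n < q (n + 1) - r.den - 1 := by
      refine (Nat.floor_lt (mul_nonneg (Nat.cast_nonneg _) (ha n).1)).2 ?_
      have hpos : 0 < q (n + 1) - r.den - 1 := by omega
      have : (0 : ℝ) < (q (n + 1) - r.den - 1 : ℕ) := by exact_mod_cast hpos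
      nlinarith [(ha n).2]
    have := residueShift_lt r (r * ((k * q (n + 1) + coarseDigit q r a n : ℕ) + a (n + 1)))
    omega
  · exact hq (n + 1) (by omega)

lemma abs_nextDigit_add_sub_le (ha : ∀ n, a n ∈ Set.Ico 0 1) {n : ℕ} (k : ℕ)
    (h : r.den + 1 < q (n + 1)) {θ : ℝ} (hθ : θ ∈ Set.Icc 0 1) :
    |nextDigit q r a n k + θ - q (n + 1) * a n| ≤ r.den + 2 := by
  rw [nextDigit, if_pos h, coarseDigit]
  have hL : ((q (n + 1) - r.den - 1 : ℕ) : ℝ) = q (n + 1) - r.den - 1 := by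
    rw [Nat.cast_sub (by omega), Nat.cast_sub (by omega)]
    push_cast
    ring
  set y := ((q (n + 1) - r.den - 1 : ℕ) : ℝ) * a n with hy
  have hy₀ : 0 ≤ y := mul_nonneg (Nat.cast_nonneg _) (ha n).1
  have h₁ := Nat.floor_le hy₀
  have h₂ := Nat.lt_floor_add_one y
  have h₃ := residueShift_lt r (r * ((k * q (n + 1) + ⌊y⌋₊ : ℕ) + a (n + 1)))
  generalize residueShift r _ = t at h₃ ⊢
  have h₃' : (t : ℝ) + 1 ≤ r.den := by exact_mod_cast h₃
  have h₄ : 0 ≤ ((r.den : ℝ) + 1) * a n := mul_nonneg (by positivity) (ha n).1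
  have h₅ : ((r.den : ℝ) + 1) * a n ≤ r.den + 1 :=
    mul_le_of_le_one_right (by positivity) (ha n).2.le
  rw [hL] at hy
  push_cast
  rw [abs_le]
  constructor <;> nlinarith [hθ.1, hθ.2]

lemma fract_mul_numer_add_lt {n : ℕ} (h : r.den + 1 < q (n + 1)) :
    Int.fract (r * (numer q r a (n + 1) + a (n + 1))) < 1 / r.den := by
  have := fract_add_mul_residueShift_lt r
    (r * ((numer q r a n * q (n + 1) + coarseDigit q r a n : ℕ) + a (n + 1)))
  rw [numer, nextDigit, if_pos h]
  push_cast at this ⊢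
  convert this using 2
  ring

lemma tendsto_TQ_sub (hinf : InfiniteInLimit q) (ha : ∀ n, a n ∈ Set.Ico 0 1) {x : ℝ}
    (hx : ∀ n, q (n + 1) * TQ q n x = nextDigit q r a n (numer q r a n) + TQ q (n + 1) x) :
    Tendsto (fun n => TQ q n x - a n) atTop (nhds 0) := by
  have hlim : Tendsto (fun n => ((r.den : ℝ) + 2) / q (n + 1)) atTop (nhds 0) :=
    tendsto_const_nhds.div_atTop
      (tendsto_natCast_atTop_atTop.comp (hinf.comp (tendsto_add_atTop_nat 1)))
  refine squeeze_zero_norm' ?_ hlim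
  filter_upwards [(tendsto_add_atTop_nat 1).eventually (hinf.eventually_gt_atTop (r.den + 1))]
    with n hn
  have hq : (0 : ℝ) < q (n + 1) := by exact_mod_cast (by omega : 0 < q (n + 1))
  calc ‖TQ q n x - a n‖ = |q (n + 1) * TQ q n x - q (n + 1) * a n| / q (n + 1) := by
        rw [← mul_sub, abs_mul, abs_of_pos hq, Real.norm_eq_abs]
        field_simp
    _ ≤ ((r.den : ℝ) + 2) / q (n + 1) := by
        gcongr
        rw [hx n]
        exact abs_nextDigit_add_sub_le ha _ hn ⟨Int.fract_nonneg _, (Int.fract_lt_one _).le⟩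

lemma eventually_TQ_mul_notMem (hinf : InfiniteInLimit q) (hr : 2 ≤ r.den) {x : ℝ}
    (hx : ∀ n, cantorProd q n * x = numer q r a n + TQ q n x)
    (hclose : Tendsto (fun n => TQ q n x - a n) atTop (nhds 0)) :
    ∀ᶠ n in atTop, TQ q n (r * x) ∉ Set.Ico (5 / 8) (7 / 8) := by
  have hsmall : ∀ᶠ n in atTop, |(r : ℝ) * (TQ q n x - a n)| ≤ 1 / 8 := by
    have := (hclose.const_mul (r : ℝ)).abs
    rw [mul_zero, abs_zero] at this
    exact this.eventually (ge_mem_nhds (by norm_num))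
  filter_upwards [hsmall, hinf.eventually_gt_atTop (r.den + 1), eventually_ge_atTop 1]
    with n hn hqn hn₁
  obtain ⟨m, rfl⟩ : ∃ m, n = m + 1 := ⟨n - 1, by omega⟩
  have hden : (1 : ℝ) / r.den ≤ 1 / 2 := by gcongr; exact_mod_cast hr
  rw [TQ, mul_left_comm, hx,
    show (r : ℝ) * (numer q r a (m + 1) + TQ q (m + 1) x)
      = r * (numer q r a (m + 1) + a (m + 1)) + r * (TQ q (m + 1) x - a (m + 1)) by ring]
  exact fract_add_notMem_Ico ((fract_mul_numer_add_lt hqn).trans_le hden) hn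

lemma exists_tendsto_TQ_sub_and_eventually_TQ_mul_notMem (hq : BasicSeq q)
    (hinf : InfiniteInLimit q) (hr : 2 ≤ r.den) (ha : ∀ n, a n ∈ Set.Ico 0 1) :
    ∃ x : ℝ, Tendsto (fun n => TQ q n x - a n) atTop (nhds 0) ∧
      ∀ᶠ n in atTop, TQ q n (r * x) ∉ Set.Ico (5 / 8) (7 / 8) := by
  obtain ⟨x, hx⟩ := exists_cantorProd_mul_eq_add_TQ (K := numer q r a)
    (E := fun n => nextDigit q r a (n - 1) (numer q r a (n - 1)))
    (fun n => by have := hq (n + 1) (by omega); omega) (fun n => rfl)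
    (fun n => nextDigit_add_two_le hq ha n _)
  have hclose := tendsto_TQ_sub hinf ha fun n => (hx n).2
  exact ⟨x, hclose, eventually_TQ_mul_notMem hinf hr (fun n => (hx n).1) hclose⟩

end Construction

end CantorSeries

theorem stmt_7 (q : ℕ → ℕ) (hq : BasicSeq q) (hinf : InfiniteInLimit q)
    (r : ℚ) (hr : ∀ m : ℤ, (m : ℚ) ≠ r) :
    ∃ x : ℝ, QDistNormal q x ∧ ¬ QDistNormal q ((r : ℝ) * x) := by
  have hden : 2 ≤ r.den := by
    have : r.den ≠ 1 := fun h => hr r.num ((Rat.den_eq_one_iff r).1 h)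
    have := r.pos
    omega
  obtain ⟨x, hx, hrx⟩ := CantorSeries.exists_tendsto_TQ_sub_and_eventually_TQ_mul_notMem hq hinf
    hden CantorSeries.blockSeq_mem_Ico
  refine ⟨x, CantorSeries.udMod1_of_tendsto_sub CantorSeries.udMod1_blockSeq
    CantorSeries.blockSeq_mem_Ico (fun n => ⟨Int.fract_nonneg _, Int.fract_lt_one _⟩) hx, ?_⟩
  refine CantorSeries.not_udMod1_of_eventually_notMem (a := 5 / 8) (b := 7 / 8) (by norm_num)
    (by norm_num) (by norm_num) ?_
  simpa only [TQ, Int.fract_fract] using hrx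
end
end

section
/- Let x_1, x_2, …, x_N and y_1, y_2, …, y_N be two finite sequences in [0,1), and let ε_1, ε_2, …, ε_N be non-negative real numbers such that |x_n − y_n| ≤ ε_n for 1 ≤ n ≤ N. Then for any ε ≥ 0, |D_N(x_1,…,x_N) − D_N(y_1,…,y_N)| ≤ 2ε + N̄(ε)/N, where N̄(ε) is the number of indices n with 1 ≤ n ≤ N and ε_n > ε. -/
/-!
If `|x n - y n| ≤ e`, then `x n ∈ [a, b)` puts `y n ∈ [0, 1)` into `[a - e, b + e) ∩ [0, 1)`,
and `y n ∈ [a + e, b - e)` puts `x n` into `[a, b)`. So, up to the points that move by more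
than `e`, each count for `x` is bounded by a count for `y` on an interval whose length differs
by at most `2e`, and this bounds `D_N(x)` by `D_N(y) + 2e + N̄(e)/N`; then swap `x` and `y`.
-/

open Filter Finset MeasureTheory

noncomputable section
open scoped Classical

/-- The counting function `A_N([a, b), x)`. -/
def icoCount (N : ℕ) (x : ℕ → ℝ) (a b : ℝ) : ℕ := #{n ∈ Icc 1 N | x n ∈ Set.Ico a b}

theorem icoCount_div_le_one (N : ℕ) (x : ℕ → ℝ) (a b : ℝ) : (icoCount N x a b : ℝ) / N ≤ 1 :=
  div_le_one_of_le₀ (by exact_mod_cast (card_filter_le _ _).trans (by simp)) N.cast_nonneg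

theorem le_discrepancy (N : ℕ) (x : ℕ → ℝ) {a b : ℝ} (ha : 0 ≤ a) (hab : a ≤ b) (hb : b ≤ 1) :
    |(icoCount N x a b : ℝ) / N - (b - a)| ≤ discrepancy N x := by
  refine le_csSup ⟨1, ?_⟩ ⟨a, b, ha, hab, hb, rfl⟩
  rintro _ ⟨a, b, ha, hab, hb, rfl⟩
  exact abs_sub_le_of_nonneg_of_le (by positivity) (icoCount_div_le_one N x a b)
    (sub_nonneg.2 hab) (by linarith)

theorem discrepancy_nonneg (N : ℕ) (x : ℕ → ℝ) : 0 ≤ discrepancy N x :=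
  (abs_nonneg _).trans (le_discrepancy N x le_rfl le_rfl zero_le_one)

theorem discrepancy_le {N : ℕ} {x : ℕ → ℝ} {c : ℝ}
    (h : ∀ a b : ℝ, 0 ≤ a → a ≤ b → b ≤ 1 → |(icoCount N x a b : ℝ) / N - (b - a)| ≤ c) :
    discrepancy N x ≤ c := by
  refine csSup_le ⟨_, 0, 0, le_rfl, le_rfl, zero_le_one, rfl⟩ ?_
  rintro _ ⟨a, b, ha, hab, hb, rfl⟩
  exact h a b ha hab hb

theorem Finset.card_filter_le_card_filter_add_card_filter {α : Type*} {s : Finset α}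
    {p q r : α → Prop} [DecidablePred p] [DecidablePred q] [DecidablePred r]
    (h : ∀ a ∈ s, p a → q a ∨ r a) : #{a ∈ s | p a} ≤ #{a ∈ s | q a} + #{a ∈ s | r a} := by
  refine (card_le_card fun a ha => ?_).trans (card_union_le _ _)
  rw [mem_filter] at ha
  rw [← filter_or, mem_filter]
  exact ⟨ha.1, h a ha.1 ha.2⟩

theorem icoCount_le_icoCount_add {N : ℕ} {x y : ℕ → ℝ} {e a b a' b' : ℝ}
    (h : ∀ n ∈ Icc 1 N, x n ∈ Set.Ico a b → |x n - y n| ≤ e → y n ∈ Set.Ico a' b') :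
    icoCount N x a b ≤ icoCount N y a' b' + #{n ∈ Icc 1 N | e < |x n - y n|} := by
  refine card_filter_le_card_filter_add_card_filter fun n hn hx => ?_
  by_cases hfar : e < |x n - y n|
  · exact Or.inr hfar
  · exact Or.inl (h n hn hx (not_lt.1 hfar))

section Perturbation

variable {N : ℕ} {x y : ℕ → ℝ} {e : ℝ}

theorem icoCount_div_sub_le (hy : ∀ n ∈ Icc 1 N, y n ∈ Set.Ico (0 : ℝ) 1) (he : 0 ≤ e)
    {a b : ℝ} (ha : 0 ≤ a) (hab : a ≤ b) (hb : b ≤ 1) :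
    (icoCount N x a b : ℝ) / N - (b - a) ≤
      discrepancy N y + (2 * e + (#{n ∈ Icc 1 N | e < |x n - y n|} : ℝ) / N) := by
  set a' := max (a - e) 0
  set b' := min (b + e) 1
  have hcount : icoCount N x a b ≤ icoCount N y a' b' + #{n ∈ Icc 1 N | e < |x n - y n|} := by
    refine icoCount_le_icoCount_add fun n hn hxn hclose => ?_
    obtain ⟨hclose₁, hclose₂⟩ := abs_le.1 hclose
    exact ⟨max_le (by linarith [hxn.1]) (hy n hn).1, lt_min (by linarith [hxn.2]) (hy n hn).2⟩
  have hdisc : (icoCount N y a' b' : ℝ) / N - (b' - a') ≤ discrepancy N y :=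
    (le_abs_self _).trans <| le_discrepancy N y (le_max_right _ _)
      (max_le (le_min (by linarith) (by linarith)) (le_min (by linarith) zero_le_one))
      (min_le_right _ _)
  have hwidth : b' - a' ≤ b - a + 2 * e := by
    linarith [min_le_left (b + e) 1, le_max_left (a - e) 0]
  have hdiv : (icoCount N x a b : ℝ) / N ≤
      (icoCount N y a' b' : ℝ) / N + (#{n ∈ Icc 1 N | e < |x n - y n|} : ℝ) / N := by
    rw [← add_div]; gcongr; exact_mod_cast hcount
  linarith

theorem sub_icoCount_div_le (he : 0 ≤ e) {a b : ℝ} (ha : 0 ≤ a) (hb : b ≤ 1) :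
    (b - a) - (icoCount N x a b : ℝ) / N ≤
      discrepancy N y + (2 * e + (#{n ∈ Icc 1 N | e < |x n - y n|} : ℝ) / N) := by
  have hfar : 0 ≤ (#{n ∈ Icc 1 N | e < |x n - y n|} : ℝ) / N := by positivity
  have hcount_nonneg : 0 ≤ (icoCount N x a b : ℝ) / N := by positivity
  rcases le_or_gt (b - a) (2 * e) with hnarrow | hwide
  · linarith [discrepancy_nonneg N y]
  have hcount : icoCount N y (a + e) (b - e) ≤
      icoCount N x a b + #{n ∈ Icc 1 N | e < |x n - y n|} := by
    simp_rw [abs_sub_comm (x _)]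
    refine icoCount_le_icoCount_add fun n hn hyn hclose => ?_
    obtain ⟨hclose₁, hclose₂⟩ := abs_le.1 hclose
    exact ⟨by linarith [hyn.1], by linarith [hyn.2]⟩
  have hdisc : (b - e - (a + e)) - (icoCount N y (a + e) (b - e) : ℝ) / N ≤
      discrepancy N y := by
    have h := le_discrepancy N y (a := a + e) (b := b - e) (by linarith) (by linarith) (by linarith)
    rw [abs_sub_comm] at h
    exact (le_abs_self _).trans h
  have hdiv : (icoCount N y (a + e) (b - e) : ℝ) / N ≤
      (icoCount N x a b : ℝ) / N + (#{n ∈ Icc 1 N | e < |x n - y n|} : ℝ) / N := by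
    rw [← add_div]; gcongr; exact_mod_cast hcount
  linarith

theorem discrepancy_le_discrepancy_add (hy : ∀ n ∈ Icc 1 N, y n ∈ Set.Ico (0 : ℝ) 1)
    (he : 0 ≤ e) :
    discrepancy N x ≤
      discrepancy N y + (2 * e + (#{n ∈ Icc 1 N | e < |x n - y n|} : ℝ) / N) :=
  discrepancy_le fun _ _ ha hab hb => abs_sub_le_iff.2
    ⟨icoCount_div_sub_le hy he ha hab hb, sub_icoCount_div_le he ha hb⟩

end Perturbation

theorem stmt_11_general (N : ℕ) (x y ε : ℕ → ℝ)
    (hx : ∀ n ∈ Finset.Icc 1 N, x n ∈ Set.Ico (0 : ℝ) 1)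
    (hy : ∀ n ∈ Finset.Icc 1 N, y n ∈ Set.Ico (0 : ℝ) 1)
    (hxy : ∀ n ∈ Finset.Icc 1 N, |x n - y n| ≤ ε n)
    (e : ℝ) (he : 0 ≤ e) :
    |discrepancy N x - discrepancy N y| ≤
      2 * e + (((Finset.Icc 1 N).filter (fun n => e < ε n)).card : ℝ) / N := by
  have hfar : (#{n ∈ Icc 1 N | e < |x n - y n|} : ℝ) / N ≤ (#{n ∈ Icc 1 N | e < ε n} : ℝ) / N := by
    gcongr with n hn
    exact hxy n hn
  have hxy_le := discrepancy_le_discrepancy_add (x := x) hy he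
  have hyx_le := discrepancy_le_discrepancy_add (x := y) hx he
  simp only [abs_sub_comm (y _)] at hyx_le
  rw [abs_sub_le_iff]
  constructor <;> linarith

/-- discrepancy perturbation lemma. -/
theorem stmt_11 (N : ℕ) (hN : 1 ≤ N) (x y ε : ℕ → ℝ)
    (hx : ∀ n ∈ Finset.Icc 1 N, x n ∈ Set.Ico (0 : ℝ) 1)
    (hy : ∀ n ∈ Finset.Icc 1 N, y n ∈ Set.Ico (0 : ℝ) 1)
    (hε : ∀ n ∈ Finset.Icc 1 N, 0 ≤ ε n)
    (hxy : ∀ n ∈ Finset.Icc 1 N, |x n - y n| ≤ ε n)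
    (e : ℝ) (he : 0 ≤ e) :
    |discrepancy N x - discrepancy N y| ≤
      2 * e + (((Finset.Icc 1 N).filter (fun n => e < ε n)).card : ℝ) / N :=
  stmt_11_general N x y ε hx hy hxy e he
end
end

section
/- Let j ≥ 1, let P = (p_n) be a non-decreasing basic sequence that is j-divergent, and let A ⊆ ℕ be a set of density zero. Then lim_{n→∞} (∑_{i=1}^n χ_A(i)/(p_i p_{i+1} ⋯ p_{i+j−1})) / P_n^{(j)} = 0, where χ_A is the indicator function of A. -/
/-!
With `a i = χ_A(i)` and weights `w i = 1 / (p_i ⋯ p_{i+j-1})`, monotonicity of `P` makes `w`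
non-increasing. Density zero gives `∑_{i ≤ k} a i ≤ δ k + C` for every `k`, and Abel summation
against the non-increasing weight transfers this to `∑_{i ≤ n} a i w i ≤ δ P_n^{(j)} + C w 1`.
Dividing by `P_n^{(j)} → ∞` bounds the ratio eventually by `2 δ`, for every `δ > 0`.
-/

open Filter Finset MeasureTheory

noncomputable section
open scoped Classical

theorem Finset.sum_Icc_one_eq_sum_range {M : Type*} [AddCommMonoid M] (f : ℕ → M) (n : ℕ) :
    ∑ i ∈ Icc 1 n, f i = ∑ i ∈ range n, f (i + 1) := by
  induction n with
  | zero => simp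
  | succ n ih => rw [sum_Icc_succ_top (by omega), ih, sum_range_succ]

theorem sum_mul_le_sum_mul_of_sum_range_le {R : Type*} [CommRing R] [PartialOrder R]
    [IsOrderedRing R] {a b w : ℕ → R} (hw : Antitone w) (hw0 : ∀ i, 0 ≤ w i) {n : ℕ}
    (hab : ∀ k ≤ n, ∑ i ∈ range k, a i ≤ ∑ i ∈ range k, b i) :
    ∑ i ∈ range n, a i * w i ≤ ∑ i ∈ range n, b i * w i := by
  -- Abel summation as an invariant: passing from `k` to `k + 1` costs
  -- `(∑ i ∈ range (k + 1), (a i - b i)) * (w k - w (k + 1)) ≤ 0`.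
  suffices key : ∀ k ≤ n, ∑ i ∈ range k, (a i - b i) * w i ≤ (∑ i ∈ range k, (a i - b i)) * w k by
    have hD : ∑ i ∈ range n, (a i - b i) ≤ 0 := by
      rw [sum_sub_distrib]; exact sub_nonpos.2 (hab n le_rfl)
    have := (key n le_rfl).trans (mul_nonpos_of_nonpos_of_nonneg hD (hw0 n))
    simpa only [sub_mul, sum_sub_distrib, sub_nonpos] using this
  intro k hk
  induction k with
  | zero => simp
  | succ k ih =>
    have hD : ∑ i ∈ range (k + 1), (a i - b i) ≤ 0 := by
      rw [sum_sub_distrib]; exact sub_nonpos.2 (hab (k + 1) hk)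
    have hstep := mul_nonpos_of_nonpos_of_nonneg hD (sub_nonneg.2 (hw (Nat.le_succ k)))
    rw [sum_range_succ, sum_range_succ] at *
    have := ih (by omega)
    linear_combination this + hstep

theorem exists_sum_range_le_mul_add_of_tendsto_zero {a : ℕ → ℝ} (ha : ∀ i, 0 ≤ a i)
    (hdens : Tendsto (fun n => (∑ i ∈ range n, a i) / n) atTop (nhds 0)) {δ : ℝ} (hδ : 0 < δ) :
    ∃ C, 0 ≤ C ∧ ∀ k, ∑ i ∈ range k, a i ≤ δ * k + C := by
  obtain ⟨m, hm⟩ := eventually_atTop.1 (hdens.eventually_lt_const hδ)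
  refine ⟨∑ i ∈ range m, a i, sum_nonneg fun i _ => ha i, fun k => ?_⟩
  have hδk : 0 ≤ δ * k := by positivity
  rcases le_or_gt k m with hkm | hmk
  · have := sum_le_sum_of_subset_of_nonneg (range_subset_range.2 hkm) fun i _ _ => ha i
    linarith
  · have hk : (0 : ℝ) < k := by exact_mod_cast (Nat.zero_le m).trans_lt hmk
    have := (div_lt_iff₀ hk).1 (hm k hmk.le)
    linarith [sum_nonneg fun i (_ : i ∈ range m) => ha i]

theorem tendsto_sum_mul_div_sum_of_density_zero {a w : ℕ → ℝ} (ha : ∀ i, 0 ≤ a i)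
    (hw : Antitone w) (hw0 : ∀ i, 0 ≤ w i)
    (hW : Tendsto (fun n => ∑ i ∈ range n, w i) atTop atTop)
    (hdens : Tendsto (fun n => (∑ i ∈ range n, a i) / n) atTop (nhds 0)) :
    Tendsto (fun n => (∑ i ∈ range n, a i * w i) / ∑ i ∈ range n, w i) atTop (nhds 0) := by
  refine tendsto_order.2 ⟨fun ε hε => Eventually.of_forall fun n => ?_, fun ε hε => ?_⟩
  · exact hε.trans_le (div_nonneg (sum_nonneg fun i _ => mul_nonneg (ha i) (hw0 i))
      (sum_nonneg fun i _ => hw0 i))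
  obtain ⟨C, hC, hsum⟩ := exists_sum_range_le_mul_add_of_tendsto_zero ha hdens (half_pos hε)
  -- compare `a` with the sequence `ε/2 + C, ε/2, ε/2, …`, whose partial sums dominate those of `a`
  have hbound : ∀ n, ∑ i ∈ range n, a i * w i ≤ ε / 2 * ∑ i ∈ range n, w i + C * w 0 := by
    intro n
    have hcmp := sum_mul_le_sum_mul_of_sum_range_le (b := fun i => ε / 2 + if i = 0 then C else 0)
      hw hw0 (n := n) fun k _ => by
        rcases k with _ | k
        · simp
        · simpa [sum_add_distrib, mul_comm] using hsum (k + 1)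
    rcases n with _ | n
    · simpa using mul_nonneg hC (hw0 0)
    · simpa [add_mul, sum_add_distrib, mul_sum] using hcmp
  have hlim : Tendsto (fun n => ε / 2 + C * w 0 / ∑ i ∈ range n, w i) atTop (nhds (ε / 2)) := by
    simpa using (tendsto_const_nhds.div_atTop hW).const_add (ε / 2)
  filter_upwards [hW.eventually_gt_atTop 0, hlim.eventually_lt_const (half_lt_self hε)]
    with n hWn hlt
  calc (∑ i ∈ range n, a i * w i) / ∑ i ∈ range n, w i
      ≤ (ε / 2 * ∑ i ∈ range n, w i + C * w 0) / ∑ i ∈ range n, w i := by gcongr; exact hbound n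
    _ = ε / 2 + C * w 0 / ∑ i ∈ range n, w i := by field_simp
    _ < ε := hlt

theorem BasicSeq.prod_Ico_pos {p : ℕ → ℕ} (hp : BasicSeq p) {i : ℕ} (hi : 1 ≤ i) (j : ℕ) :
    0 < ∏ t ∈ Ico i (i + j), (p t : ℝ) :=
  prod_pos fun t ht => Nat.cast_pos.2 <| by linarith [hp t (hi.trans (mem_Ico.1 ht).1)]

theorem prod_Ico_le_prod_Ico_of_monotoneOn {p : ℕ → ℕ} (hmono : MonotoneOn p (Set.Ici 1))
    {a b : ℕ} (ha : 1 ≤ a) (hab : a ≤ b) (j : ℕ) :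
    ∏ t ∈ Ico a (a + j), (p t : ℝ) ≤ ∏ t ∈ Ico b (b + j), (p t : ℝ) := by
  simp only [prod_Ico_eq_prod_range, Nat.add_sub_cancel_left]
  exact prod_le_prod (fun _ _ => Nat.cast_nonneg _) fun k _ => Nat.cast_le.2 <|
    hmono (Set.mem_Ici.2 (by omega)) (Set.mem_Ici.2 (by omega)) (by omega)

theorem antitone_one_div_prod_Ico {p : ℕ → ℕ} (hp : BasicSeq p) (hmono : MonotoneOn p (Set.Ici 1))
    (j : ℕ) : Antitone fun i => 1 / ∏ t ∈ Ico (i + 1) (i + 1 + j), (p t : ℝ) := fun a b hab =>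
  one_div_le_one_div_of_le (hp.prod_Ico_pos (Nat.le_add_left 1 a) j)
    (prod_Ico_le_prod_Ico_of_monotoneOn hmono (Nat.le_add_left 1 a) (by omega) j)

theorem stmt_13_general (j : ℕ) (p : ℕ → ℕ) (hp : BasicSeq p)
    (hmono : ∀ m n, 1 ≤ m → m ≤ n → p m ≤ p n)
    (hdiv : KDivergent p j)
    (A : Set ℕ) (hA : DensityZero A) :
    Filter.Tendsto
      (fun n => (∑ i ∈ Finset.Icc 1 n,
          (if i ∈ A then (1 : ℝ) else 0) / ∏ t ∈ Finset.Ico i (i + j), (p t : ℝ)) / Qnk p j n)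
      Filter.atTop (nhds 0) := by
  set a : ℕ → ℝ := fun i => if i + 1 ∈ A then 1 else 0
  set w : ℕ → ℝ := fun i => 1 / ∏ t ∈ Ico (i + 1) (i + 1 + j), (p t : ℝ)
  have hQ : ∀ n, Qnk p j n = ∑ i ∈ range n, w i := fun n => sum_Icc_one_eq_sum_range _ n
  have hT : ∀ n, ∑ i ∈ Icc 1 n, (if i ∈ A then (1 : ℝ) else 0) / ∏ t ∈ Ico i (i + j), (p t : ℝ)
      = ∑ i ∈ range n, a i * w i := fun n => by
    rw [sum_Icc_one_eq_sum_range]; simp only [a, w, mul_one_div]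
  have hdens : Tendsto (fun n => (∑ i ∈ range n, a i) / n) atTop (nhds 0) := by
    refine hA.congr fun n => ?_
    rw [card_filter, Nat.cast_sum, sum_Icc_one_eq_sum_range]
    simp only [a, Nat.cast_ite, Nat.cast_one, Nat.cast_zero]
  simp only [hT, hQ]
  refine tendsto_sum_mul_div_sum_of_density_zero (fun i => by positivity)
    (antitone_one_div_prod_Ico hp (fun m hm n _ hmn => hmono m n hm hmn) j)
    (fun i => (one_div_pos.2 (hp.prod_Ico_pos (Nat.le_add_left 1 i) j)).le)
    (Tendsto.congr hQ hdiv) hdens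

theorem stmt_13 (j : ℕ) (hj : 1 ≤ j) (p : ℕ → ℕ) (hp : BasicSeq p)
    (hmono : ∀ m n, 1 ≤ m → m ≤ n → p m ≤ p n)
    (hdiv : KDivergent p j)
    (A : Set ℕ) (hA : DensityZero A) :
    Filter.Tendsto
      (fun n => (∑ i ∈ Finset.Icc 1 n,
          (if i ∈ A then (1 : ℝ) else 0) / ∏ t ∈ Finset.Ico i (i + j), (p t : ℝ)) / Qnk p j n)
      Filter.atTop (nhds 0) :=
  stmt_13_general j p hp hmono hdiv A hA
end
end

section
/- Let (w_n) and (s_n) be sequences of positive real numbers with ∑_{n=1}^∞ w_n = ∑_{n=1}^∞ s_n = ∞, and suppose w_n/s_n is non-increasing. Then for every bounded sequence (a_n) of real numbers: liminf_{n→∞} (∑_{k=1}^n s_k a_k)/(∑_{k=1}^n s_k) ≤ liminf_{n→∞} (∑_{k=1}^n w_k a_k)/(∑_{k=1}^n w_k) ≤ limsup_{n→∞} (∑_{k=1}^n w_k a_k)/(∑_{k=1}^n w_k) ≤ limsup_{n→∞} (∑_{k=1}^n s_k a_k)/(∑_{k=1}^n s_k). -/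
open Filter Finset MeasureTheory

noncomputable section
open scoped Classical

/-!
Put `r k = w k / s k`, a nonincreasing sequence. If `β` exceeds the limsup of the `s`-means, the
partial sums `B n = ∑_{k ≤ n} s k (a k - β)` are eventually nonpositive, and Abel summation
`∑_{k ≤ n} w k (a k - β) = ∑_{k ≤ n} r k (B k - B (k - 1)) = r n B n + ∑_{k < n} (r k - r (k + 1)) B k`
bounds the left side from above by a constant. Dividing by `∑_{k ≤ n} w k → ∞` shows that the
limsup of the `w`-means is at most `β`. The liminf inequality is the same statement for `-a`.
-/

def weightedMean (u a : ℕ → ℝ) (n : ℕ) : ℝ :=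
  (∑ k ∈ Icc 1 n, u k * a k) / ∑ k ∈ Icc 1 n, u k

lemma Real.liminf_eq_neg_limsup_neg {ι : Type*} (f : ι → ℝ) (l : Filter ι) :
    liminf f l = -limsup (-f) l := by
  rw [liminf_eq, limsup_eq, Real.sInf_def, neg_neg]
  congr 1
  ext b
  simp only [Set.mem_neg, Set.mem_ofPred_eq, Pi.neg_apply, neg_le_neg_iff, neg_le]

lemma sum_Icc_one_pos {u : ℕ → ℝ} (hu : ∀ k, 1 ≤ k → 0 < u k) {n : ℕ} (hn : 1 ≤ n) :
    0 < ∑ k ∈ Icc 1 n, u k :=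
  sum_pos (fun k hk => hu k (mem_Icc.1 hk).1) ⟨1, mem_Icc.2 ⟨le_rfl, hn⟩⟩

lemma sum_Icc_mul_le_of_sum_Icc_nonpos (r b : ℕ → ℝ) {N : ℕ}
    (hr : ∀ k, N ≤ k → r (k + 1) ≤ r k) (hb : ∀ k, N ≤ k → ∑ i ∈ Icc 1 k, b i ≤ 0)
    {n : ℕ} (hn : N ≤ n) :
    ∑ k ∈ Icc 1 n, r k * b k ≤
      ∑ k ∈ Icc 1 N, r k * b k - r N * ∑ k ∈ Icc 1 N, b k + r n * ∑ k ∈ Icc 1 n, b k := by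
  induction n, hn using Nat.le_induction with
  | base => simp
  | succ n hn ih =>
    rw [sum_Icc_succ_top (by omega), sum_Icc_succ_top (by omega)]
    nlinarith [mul_nonpos_of_nonneg_of_nonpos (sub_nonneg.2 (hr n hn)) (hb n hn)]

lemma exists_sum_Icc_mul_le_of_sum_Icc_nonpos (r b : ℕ → ℝ) {N : ℕ}
    (hr : ∀ k, N ≤ k → r (k + 1) ≤ r k) (hr₀ : ∀ k, N ≤ k → 0 ≤ r k)
    (hb : ∀ k, N ≤ k → ∑ i ∈ Icc 1 k, b i ≤ 0) :
    ∃ K, ∀ n, N ≤ n → ∑ k ∈ Icc 1 n, r k * b k ≤ K :=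
  ⟨∑ k ∈ Icc 1 N, r k * b k - r N * ∑ k ∈ Icc 1 N, b k, fun n hn =>
    (sum_Icc_mul_le_of_sum_Icc_nonpos r b hr hb hn).trans
      (add_le_of_nonpos_right (mul_nonpos_of_nonneg_of_nonpos (hr₀ n hn) (hb n hn)))⟩

namespace weightedMean

variable {u a : ℕ → ℝ} {n : ℕ}

lemma neg (u a : ℕ → ℝ) : weightedMean u (-a) = -weightedMean u a := by
  ext n
  simp [weightedMean, neg_div]

lemma sub_const (h : ∑ k ∈ Icc 1 n, u k ≠ 0) (β : ℝ) :
    weightedMean u a n - β = (∑ k ∈ Icc 1 n, u k * (a k - β)) / ∑ k ∈ Icc 1 n, u k := by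
  rw [weightedMean, div_sub' h, sum_mul, ← sum_sub_distrib]
  exact congrArg (· / _) (sum_congr rfl fun k _ => by ring)

lemma le_of_forall_le (hu : ∀ k, 1 ≤ k → 0 < u k) {C : ℝ} (ha : ∀ k, a k ≤ C) (hn : 1 ≤ n) :
    weightedMean u a n ≤ C := by
  rw [weightedMean, div_le_iff₀ (sum_Icc_one_pos hu hn), mul_sum]
  exact sum_le_sum fun k hk => by
    rw [mul_comm C]
    exact mul_le_mul_of_nonneg_left (ha k) (hu k (mem_Icc.1 hk).1).le

variable {C : ℝ}

lemma isBoundedUnder_le (hu : ∀ k, 1 ≤ k → 0 < u k) (ha : ∀ k, |a k| ≤ C) :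
    IsBoundedUnder (· ≤ ·) atTop (weightedMean u a) :=
  ⟨C, eventually_map.2 <| eventually_atTop.2
    ⟨1, fun _ hn => le_of_forall_le hu (fun k => (le_abs_self _).trans (ha k)) hn⟩⟩

lemma isBoundedUnder_ge (hu : ∀ k, 1 ≤ k → 0 < u k) (ha : ∀ k, |a k| ≤ C) :
    IsBoundedUnder (· ≥ ·) atTop (weightedMean u a) := by
  refine ⟨-C, eventually_map.2 <| eventually_atTop.2 ⟨1, fun n hn => ?_⟩⟩
  have := le_of_forall_le (a := -a) hu (fun k => (neg_le_abs _).trans (ha k)) hn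
  rw [neg] at this
  exact neg_le.1 this

theorem limsup_le_limsup_of_antitone_ratio {w s : ℕ → ℝ}
    (hw : ∀ k, 1 ≤ k → 0 < w k) (hs : ∀ k, 1 ≤ k → 0 < s k)
    (hwdiv : Tendsto (fun n => ∑ k ∈ Icc 1 n, w k) atTop atTop)
    (hmono : ∀ m n, 1 ≤ m → m ≤ n → w n / s n ≤ w m / s m) (ha : ∀ k, |a k| ≤ C) :
    limsup (weightedMean w a) atTop ≤ limsup (weightedMean s a) atTop := by
  refine le_of_forall_gt_imp_ge_of_dense fun β hβ => ?_
  obtain ⟨N, hN⟩ := eventually_atTop.1 <|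
    (eventually_lt_of_limsup_lt hβ (isBoundedUnder_le hs ha)).and (eventually_ge_atTop 1)
  have hsβ : ∀ k, N ≤ k → ∑ i ∈ Icc 1 k, s i * (a i - β) ≤ 0 := fun k hk => by
    have hpos := sum_Icc_one_pos hs (hN k hk).2
    have hmean := sub_nonpos.2 (hN k hk).1.le
    rwa [sub_const hpos.ne', div_le_iff₀ hpos, zero_mul] at hmean
  obtain ⟨K, hK⟩ := exists_sum_Icc_mul_le_of_sum_Icc_nonpos (fun k => w k / s k) _
    (fun k hk => hmono k (k + 1) ((hN k hk).2) k.le_succ)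
    (fun k hk => div_nonneg (hw k (hN k hk).2).le (hs k (hN k hk).2).le) hsβ
  have hbound : ∀ᶠ n in atTop, weightedMean w a n ≤ β + K / ∑ k ∈ Icc 1 n, w k := by
    filter_upwards [eventually_ge_atTop N] with n hn
    have hpos := sum_Icc_one_pos hw ((hN n hn).2)
    have hratio : ∑ k ∈ Icc 1 n, w k / s k * (s k * (a k - β)) = ∑ k ∈ Icc 1 n, w k * (a k - β) :=
      sum_congr rfl fun k hk => by
        have := (hs k (mem_Icc.1 hk).1).ne'
        field_simp
    rw [← sub_le_iff_le_add', sub_const hpos.ne', div_le_div_iff_of_pos_right hpos, ← hratio]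
    exact hK n hn
  have hlim : Tendsto (fun n => β + K / ∑ k ∈ Icc 1 n, w k) atTop (nhds β) := by
    simpa using tendsto_const_nhds.add (tendsto_const_nhds.div_atTop hwdiv)
  calc limsup (weightedMean w a) atTop
      ≤ limsup (fun n => β + K / ∑ k ∈ Icc 1 n, w k) atTop :=
        limsup_le_limsup hbound (isBoundedUnder_ge hw ha).isCoboundedUnder_le
          hlim.isBoundedUnder_le
    _ = β := hlim.limsup_eq

end weightedMean

theorem stmt_14_general (w s a : ℕ → ℝ)
    (hw : ∀ n, 1 ≤ n → 0 < w n) (hs : ∀ n, 1 ≤ n → 0 < s n)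
    (hwdiv : Filter.Tendsto (fun n => ∑ k ∈ Finset.Icc 1 n, w k) Filter.atTop Filter.atTop)
    (hmono : ∀ m n, 1 ≤ m → m ≤ n → w n / s n ≤ w m / s m)
    (ha : ∃ C, ∀ n, |a n| ≤ C) :
    Filter.liminf (fun n => (∑ k ∈ Finset.Icc 1 n, s k * a k) / (∑ k ∈ Finset.Icc 1 n, s k))
        Filter.atTop ≤
      Filter.liminf (fun n => (∑ k ∈ Finset.Icc 1 n, w k * a k) / (∑ k ∈ Finset.Icc 1 n, w k))
        Filter.atTop ∧
    Filter.liminf (fun n => (∑ k ∈ Finset.Icc 1 n, w k * a k) / (∑ k ∈ Finset.Icc 1 n, w k))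
        Filter.atTop ≤
      Filter.limsup (fun n => (∑ k ∈ Finset.Icc 1 n, w k * a k) / (∑ k ∈ Finset.Icc 1 n, w k))
        Filter.atTop ∧
    Filter.limsup (fun n => (∑ k ∈ Finset.Icc 1 n, w k * a k) / (∑ k ∈ Finset.Icc 1 n, w k))
        Filter.atTop ≤
      Filter.limsup (fun n => (∑ k ∈ Finset.Icc 1 n, s k * a k) / (∑ k ∈ Finset.Icc 1 n, s k))
        Filter.atTop := by
  obtain ⟨C, hC⟩ := ha
  have hC_neg : ∀ n, |(-a) n| ≤ C := fun n => by simpa using hC n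
  refine ⟨?_, liminf_le_limsup (weightedMean.isBoundedUnder_le hw hC)
      (weightedMean.isBoundedUnder_ge hw hC),
    weightedMean.limsup_le_limsup_of_antitone_ratio hw hs hwdiv hmono hC⟩
  change liminf (weightedMean s a) atTop ≤ liminf (weightedMean w a) atTop
  rw [Real.liminf_eq_neg_limsup_neg, Real.liminf_eq_neg_limsup_neg, neg_le_neg_iff,
    ← weightedMean.neg, ← weightedMean.neg]
  exact weightedMean.limsup_le_limsup_of_antitone_ratio hw hs hwdiv hmono hC_neg

/-- Rajagopal's weighted means theorem. -/
theorem stmt_14 (w s a : ℕ → ℝ)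
    (hw : ∀ n, 1 ≤ n → 0 < w n) (hs : ∀ n, 1 ≤ n → 0 < s n)
    (hwdiv : Filter.Tendsto (fun n => ∑ k ∈ Finset.Icc 1 n, w k) Filter.atTop Filter.atTop)
    (hsdiv : Filter.Tendsto (fun n => ∑ k ∈ Finset.Icc 1 n, s k) Filter.atTop Filter.atTop)
    (hmono : ∀ m n, 1 ≤ m → m ≤ n → w n / s n ≤ w m / s m)
    (ha : ∃ C, ∀ n, |a n| ≤ C) :
    Filter.liminf (fun n => (∑ k ∈ Finset.Icc 1 n, s k * a k) / (∑ k ∈ Finset.Icc 1 n, s k))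
        Filter.atTop ≤
      Filter.liminf (fun n => (∑ k ∈ Finset.Icc 1 n, w k * a k) / (∑ k ∈ Finset.Icc 1 n, w k))
        Filter.atTop ∧
    Filter.liminf (fun n => (∑ k ∈ Finset.Icc 1 n, w k * a k) / (∑ k ∈ Finset.Icc 1 n, w k))
        Filter.atTop ≤
      Filter.limsup (fun n => (∑ k ∈ Finset.Icc 1 n, w k * a k) / (∑ k ∈ Finset.Icc 1 n, w k))
        Filter.atTop ∧
    Filter.limsup (fun n => (∑ k ∈ Finset.Icc 1 n, w k * a k) / (∑ k ∈ Finset.Icc 1 n, w k))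
        Filter.atTop ≤
      Filter.limsup (fun n => (∑ k ∈ Finset.Icc 1 n, s k * a k) / (∑ k ∈ Finset.Icc 1 n, s k))
        Filter.atTop :=
  stmt_14_general w s a hw hs hwdiv hmono ha
end
end
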